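/- arXiv:2112.06801 — 4 statements merged into one kernel-verified Lean document; each statement's English description precedes it below -/
import Mathlib

section
/- For all sufficiently small ε > 0, the polynomial g_ε(x) = -x^3 + 6x^2(1-εx) - 11x(1-εx) + 6(1-εx)^2 has at least three distinct zeros in the interval (0, 1/ε), with g_ε' negative at two of them and positive at one of them. -/
/-!
Expanding the brackets, `g_ε(x) = -(x - 1)(x - 2)(x - 3) - ε x (6x² - 11x + 12) + 6ε²x²`, so `g_ε`
is an `O(ε)` perturbation on bounded sets of the cubic `-(x - 1)(x - 2)(x - 3)`, whose simple zeros
`1, 2, 3` have derivatives `-2, 1, -2`. For `ε ≤ 1/1000` the sign changes of `g_ε` across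
`[k - 1/10, k + 1/10]`, `k = 1, 2, 3`, and the sign of `g_ε'` on these intervals survive the perturbation,
and the intermediate value theorem provides the three zeros.
-/

open Set

theorem exists_mem_Ioo_eq_zero_deriv_neg {f f' : ℝ → ℝ} {a b : ℝ} (hab : a ≤ b)
    (hf : ∀ x ∈ Icc a b, HasDerivAt f (f' x) x) (ha : 0 < f a) (hb : f b < 0)
    (hf' : ∀ x ∈ Icc a b, f' x < 0) : ∃ x ∈ Ioo a b, f x = 0 ∧ deriv f x < 0 := by
  have hc : ContinuousOn f (Icc a b) := fun x hx => (hf x hx).continuousAt.continuousWithinAt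
  obtain ⟨x, hx, hfx⟩ := intermediate_value_Ioo' hab hc ⟨hb, ha⟩
  have hx' := Ioo_subset_Icc_self hx
  exact ⟨x, hx, hfx, (hf x hx').deriv ▸ hf' x hx'⟩

theorem exists_mem_Ioo_eq_zero_deriv_pos {f f' : ℝ → ℝ} {a b : ℝ} (hab : a ≤ b)
    (hf : ∀ x ∈ Icc a b, HasDerivAt f (f' x) x) (ha : f a < 0) (hb : 0 < f b)
    (hf' : ∀ x ∈ Icc a b, 0 < f' x) : ∃ x ∈ Ioo a b, f x = 0 ∧ 0 < deriv f x := by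
  have hc : ContinuousOn f (Icc a b) := fun x hx => (hf x hx).continuousAt.continuousWithinAt
  obtain ⟨x, hx, hfx⟩ := intermediate_value_Ioo hab hc ⟨ha, hb⟩
  have hx' := Ioo_subset_Icc_self hx
  exact ⟨x, hx, hfx, (hf x hx').deriv ▸ hf' x hx'⟩

namespace Schlogl

def field (ε x : ℝ) : ℝ :=
  -x^3 + 6*x^2*(1 - ε*x) - 11*x*(1 - ε*x) + 6*(1 - ε*x)^2

def fieldDeriv (ε x : ℝ) : ℝ :=
  -(3*x^2 - 12*x + 11) - ε*(18*x^2 - 22*x + 12) + 12*ε^2*x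

theorem hasDerivAt_field (ε x : ℝ) : HasDerivAt (field ε) (fieldDeriv ε x) x := by
  have hy : HasDerivAt (fun x : ℝ => 1 - ε*x) (-ε) x := by
    simpa using ((hasDerivAt_id x).const_mul ε).const_sub 1
  have hx2 : HasDerivAt (fun x : ℝ => x^2) (2*x) x := by simpa using hasDerivAt_pow 2 x
  have hx3 : HasDerivAt (fun x : ℝ => x^3) (3*x^2) x := by simpa using hasDerivAt_pow 3 x
  refine (((hx3.neg.add ((hx2.const_mul 6).mul hy)).sub
    (((hasDerivAt_id x).const_mul 11).mul hy)).add ((hy.pow 2).const_mul 6)).congr_deriv ?_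
  simp only [fieldDeriv, id]
  push_cast
  ring

section

variable {ε : ℝ} (hε : 0 ≤ ε) (hε₀ : ε ≤ 1/1000)
include hε hε₀

theorem exists_stable_zero_near_one :
    ∃ x ∈ Ioo (9/10) (11/10), field ε x = 0 ∧ deriv (field ε) x < 0 :=
  exists_mem_Ioo_eq_zero_deriv_neg (by norm_num) (fun x _ => hasDerivAt_field ε x)
    (by simp only [field]; nlinarith) (by simp only [field]; nlinarith)
    (fun x ⟨hx₁, hx₂⟩ => by simp only [fieldDeriv]; nlinarith [mul_nonneg hε (sub_nonneg.2 hx₁)])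

theorem exists_unstable_zero_near_two :
    ∃ x ∈ Ioo (19/10) (21/10), field ε x = 0 ∧ 0 < deriv (field ε) x :=
  exists_mem_Ioo_eq_zero_deriv_pos (by norm_num) (fun x _ => hasDerivAt_field ε x)
    (by simp only [field]; nlinarith) (by simp only [field]; nlinarith)
    (fun x ⟨hx₁, hx₂⟩ => by simp only [fieldDeriv]; nlinarith [mul_nonneg hε (sub_nonneg.2 hx₁)])

theorem exists_stable_zero_near_three :
    ∃ x ∈ Ioo (29/10) (31/10), field ε x = 0 ∧ deriv (field ε) x < 0 :=
  exists_mem_Ioo_eq_zero_deriv_neg (by norm_num) (fun x _ => hasDerivAt_field ε x)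
    (by simp only [field]; nlinarith) (by simp only [field]; nlinarith)
    (fun x ⟨hx₁, hx₂⟩ => by simp only [fieldDeriv]; nlinarith [mul_nonneg hε (sub_nonneg.2 hx₁)])

end

end Schlogl

open Schlogl in
theorem lifted_schlogl_three_equilibria :
    ∃ ε₀ : ℝ, 0 < ε₀ ∧ ∀ ε : ℝ, 0 < ε → ε < ε₀ →
      let g : ℝ → ℝ := fun x => -x^3 + 6*x^2*(1 - ε*x) - 11*x*(1 - ε*x) + 6*(1 - ε*x)^2
      ∃ x₁ x₂ x₃ : ℝ,
        x₁ ∈ Set.Ioo 0 (1/ε) ∧ x₂ ∈ Set.Ioo 0 (1/ε) ∧ x₃ ∈ Set.Ioo 0 (1/ε) ∧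
        x₁ ≠ x₂ ∧ x₁ ≠ x₃ ∧ x₂ ≠ x₃ ∧
        g x₁ = 0 ∧ g x₂ = 0 ∧ g x₃ = 0 ∧
        deriv g x₁ < 0 ∧ deriv g x₃ < 0 ∧ deriv g x₂ > 0 := by
  refine ⟨1/1000, by norm_num, fun ε hε hε₀ => ?_⟩
  obtain ⟨x₁, ⟨hx₁, hx₁'⟩, hg₁, hd₁⟩ := exists_stable_zero_near_one hε.le hε₀.le
  obtain ⟨x₂, ⟨hx₂, hx₂'⟩, hg₂, hd₂⟩ := exists_unstable_zero_near_two hε.le hε₀.le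
  obtain ⟨x₃, ⟨hx₃, hx₃'⟩, hg₃, hd₃⟩ := exists_stable_zero_near_three hε.le hε₀.le
  have hbound : (31/10 : ℝ) < 1/ε := by rw [lt_div_iff₀ hε]; linarith
  exact ⟨x₁, x₂, x₃, ⟨by linarith, by linarith⟩, ⟨by linarith, by linarith⟩,
    ⟨by linarith, by linarith⟩, by linarith, by linarith, by linarith, hg₁, hg₂, hg₃, hd₁, hd₃, hd₂⟩
end

section
/- Let F(x,y,z) = (κ₁xz - κ₂xy, κ₂xy - κ₃y, -κ₁xz + κ₃y) with κ₁, κ₂, κ₃ > 0. Then the divergence of the rescaled vector field F(x,y,z)/(xyz) equals -κ₃/(x z²), which is strictly negative on the open positive octant ℝ³₊. -/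
/-!
The rescaled components `F₁/(xyz)` and `F₂/(xyz)` do not depend on `x` and `y` respectively,
since `x ∣ F₁` and `y ∣ F₂`. Only the term `κ₃ y/(xyz) = κ₃/(xz)` of the third component
varies with its own variable, and its `z`-derivative is `-κ₃/(xz²)`.
-/

section

variable {𝕜 : Type*} [NontriviallyNormedField 𝕜]

theorem deriv_mul_div_mul_left_eq_zero (a b : 𝕜) {x : 𝕜} (hx : x ≠ 0) :
    deriv (fun s => s * a / (s * b)) x = 0 := by
  have h_const : (fun s => s * a / (s * b)) =ᶠ[nhds x] fun _ => a / b := by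
    filter_upwards [eventually_ne_nhds hx] with s hs
    exact mul_div_mul_left a b hs
  rw [h_const.deriv_eq, deriv_const]

theorem deriv_affine_div_mul (a b c : 𝕜) {x : 𝕜} (hx : x ≠ 0) :
    deriv (fun s => (a * s + b) / (c * s)) x = -b / (c * x ^ 2) := by
  have h_eq : (fun s => (a * s + b) / (c * s)) =ᶠ[nhds x] fun s => a / c + b / c * s⁻¹ := by
    filter_upwards [eventually_ne_nhds hx] with s hs
    rw [add_div, mul_div_mul_right a c hs]
    ring
  have h_deriv : HasDerivAt (fun s => a / c + b / c * s⁻¹) (b / c * -(x ^ 2)⁻¹) x :=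
    ((hasDerivAt_inv hx).const_mul (b / c)).const_add (a / c)
  rw [h_eq.deriv_eq, h_deriv.deriv]
  ring

end

theorem lifted_lotka_dulac_divergence_general
    (κ₁ κ₂ κ₃ : ℝ) (h₃ : 0 < κ₃)
    (x y z : ℝ) (hx : 0 < x) (hy : 0 < y) (hz : 0 < z) :
    deriv (fun s => (κ₁*s*z - κ₂*s*y)/(s*y*z)) x
      + deriv (fun s => (κ₂*x*s - κ₃*s)/(x*s*z)) y
      + deriv (fun s => (-κ₁*x*s + κ₃*y)/(x*y*s)) z
      = -κ₃/(x*z^2) ∧ -κ₃/(x*z^2) < 0 := by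
  have hG₁ : deriv (fun s => (κ₁*s*z - κ₂*s*y)/(s*y*z)) x = 0 := by
    have h_factor : (fun s => (κ₁*s*z - κ₂*s*y)/(s*y*z))
        = fun s => s * (κ₁*z - κ₂*y) / (s * (y*z)) := by
      funext s; ring
    rw [h_factor, deriv_mul_div_mul_left_eq_zero _ _ hx.ne']
  have hG₂ : deriv (fun s => (κ₂*x*s - κ₃*s)/(x*s*z)) y = 0 := by
    have h_factor : (fun s => (κ₂*x*s - κ₃*s)/(x*s*z))
        = fun s => s * (κ₂*x - κ₃) / (s * (x*z)) := by
      funext s; ring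
    rw [h_factor, deriv_mul_div_mul_left_eq_zero _ _ hy.ne']
  have hG₃ : deriv (fun s => (-κ₁*x*s + κ₃*y)/(x*y*s)) z = -κ₃/(x*z^2) := by
    rw [deriv_affine_div_mul (-κ₁*x) (κ₃*y) (x*y) hz.ne']
    field_simp
  refine ⟨by rw [hG₁, hG₂, hG₃]; ring, ?_⟩
  exact div_neg_of_neg_of_pos (neg_neg_of_pos h₃) (by positivity)

theorem lifted_lotka_dulac_divergence
    (κ₁ κ₂ κ₃ : ℝ) (h₁ : 0 < κ₁) (h₂ : 0 < κ₂) (h₃ : 0 < κ₃)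
    (x y z : ℝ) (hx : 0 < x) (hy : 0 < y) (hz : 0 < z) :
    deriv (fun s => (κ₁*s*z - κ₂*s*y)/(s*y*z)) x
      + deriv (fun s => (κ₂*x*s - κ₃*s)/(x*s*z)) y
      + deriv (fun s => (-κ₁*x*s + κ₃*y)/(x*y*s)) z
      = -κ₃/(x*z^2) ∧ -κ₃/(x*z^2) < 0 :=
  lifted_lotka_dulac_divergence_general κ₁ κ₂ κ₃ h₃ x y z hx hy hz
end

section
/- Consider the restricted homogenised Brusselator ẋ = κ₁(c - x - y) - κ₂x - κ₃x + κ₄x²y, ẏ = κ₃x - κ₄x²y on {(x,y) ∈ ℝ²_{≥0} : x + y ≤ c}, with all parameters positive. The point (0, c) is an equilibrium, and the Jacobian matrix there, J₀ = [[-κ₁-κ₂-κ₃, -κ₁],[κ₃, 0]], satisfies det J₀ = κ₁κ₃ > 0, tr J₀ < 0, and (tr J₀)² - 4 det J₀ = (κ₁+κ₂-κ₃)² + 4κ₂κ₃ > 0; hence J₀ has two distinct real negative eigenvalues. -/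
open Polynomial in
theorem homogenised_brusselator_corner_equilibrium_stable
    (κ₁ κ₂ κ₃ κ₄ c : ℝ) (h₁ : 0 < κ₁) (h₂ : 0 < κ₂) (h₃ : 0 < κ₃) (h₄ : 0 < κ₄)
    (hc : 0 < c) :
    (κ₁*(c - 0 - c) - κ₂*0 - κ₃*0 + κ₄*0^2*c = 0 ∧ κ₃*0 - κ₄*0^2*c = 0) ∧
    let J₀ : Matrix (Fin 2) (Fin 2) ℝ := !![-κ₁ - κ₂ - κ₃, -κ₁; κ₃, 0]
    J₀.det = κ₁*κ₃ ∧ 0 < J₀.det ∧ J₀.trace < 0 ∧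
    J₀.trace^2 - 4*J₀.det = (κ₁ + κ₂ - κ₃)^2 + 4*κ₂*κ₃ ∧
    0 < J₀.trace^2 - 4*J₀.det ∧
    ∃ lam₁ lam₂ : ℝ, lam₁ ≠ lam₂ ∧ lam₁ < 0 ∧ lam₂ < 0 ∧
      J₀.charpoly = (X - C lam₁) * (X - C lam₂) := by
  refine ⟨⟨by ring, by ring⟩, ?_⟩
  intro J₀
  have hdet : J₀.det = κ₁*κ₃ := by
    show Matrix.det _ = _
    rw [Matrix.det_fin_two_of]; ring
  have htr : J₀.trace = -κ₁ - κ₂ - κ₃ := by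
    show Matrix.trace _ = _
    rw [Matrix.trace_fin_two_of]; ring
  have hdiscval : J₀.trace^2 - 4*J₀.det = (κ₁ + κ₂ - κ₃)^2 + 4*κ₂*κ₃ := by
    rw [hdet, htr]; ring
  have hdiscpos : 0 < J₀.trace^2 - 4*J₀.det := by
    rw [hdiscval]; positivity
  have hdetpos : 0 < J₀.det := by rw [hdet]; positivity
  have htrneg : J₀.trace < 0 := by rw [htr]; linarith
  refine ⟨hdet, hdetpos, htrneg, hdiscval, hdiscpos, ?_⟩
  set T := J₀.trace with hT
  set Δ := T^2 - 4*J₀.det with hΔ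
  have hs : 0 < Real.sqrt Δ := Real.sqrt_pos.mpr hdiscpos
  have hsq : Real.sqrt Δ ^ 2 = Δ := Real.sq_sqrt hdiscpos.le
  have hslt : Real.sqrt Δ < -T := by
    nlinarith [hs, hsq, hdetpos]
  have hcp : J₀.charpoly = X^2 - C T * X + C J₀.det := by
    rw [Matrix.charpoly, Matrix.det_fin_two]
    have e00 : Matrix.charmatrix J₀ 0 0 = X - C (J₀ 0 0) := Matrix.charmatrix_apply_eq _ _
    have e11 : Matrix.charmatrix J₀ 1 1 = X - C (J₀ 1 1) := Matrix.charmatrix_apply_eq _ _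
    have e01 : Matrix.charmatrix J₀ 0 1 = -C (J₀ 0 1) := Matrix.charmatrix_apply_ne _ _ _ (by decide)
    have e10 : Matrix.charmatrix J₀ 1 0 = -C (J₀ 1 0) := Matrix.charmatrix_apply_ne _ _ _ (by decide)
    rw [e00, e11, e01, e10]
    have hTv : T = J₀ 0 0 + J₀ 1 1 := by rw [hT]; exact Matrix.trace_fin_two _
    have hDv : J₀.det = J₀ 0 0 * J₀ 1 1 - J₀ 0 1 * J₀ 1 0 := Matrix.det_fin_two _
    rw [hTv, hDv, map_add, map_sub, map_mul, map_mul]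
    ring
  refine ⟨(T - Real.sqrt Δ)/2, (T + Real.sqrt Δ)/2, by intro h; nlinarith, by nlinarith, by nlinarith, ?_⟩
  rw [hcp]
  have h1 : T = (T - Real.sqrt Δ)/2 + (T + Real.sqrt Δ)/2 := by ring
  have h2 : J₀.det = (T - Real.sqrt Δ)/2 * ((T + Real.sqrt Δ)/2) := by
    have h3 : (T - Real.sqrt Δ)/2 * ((T + Real.sqrt Δ)/2) = (T^2 - Real.sqrt Δ ^2)/4 := by ring
    rw [h3, hsq, hΔ]; ring
  rw [h1, h2, map_add, map_mul]
  ring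
end

section
/- There exist positive parameters for which both conditions tr J(t) = 0 and det J(t) > 0 hold on the equilibrium branch of the restricted homogenised Brusselator; specifically, the conditions t² = (κ₃-κ₁-κ₂)/κ₄ and (κ₁+κ₂)κ₄t² > κ₁κ₃ are simultaneously satisfiable (for some κᵢ > 0 and t > 0) if and only if κ₂κ₃ > (κ₁+κ₂)². -/
theorem homogenised_brusselator_hopf_condition :
    (∃ κ₁ κ₂ κ₃ κ₄ t : ℝ, 0 < κ₁ ∧ 0 < κ₂ ∧ 0 < κ₃ ∧ 0 < κ₄ ∧ 0 < t ∧
      κ₄*t^2 = κ₃ - κ₁ - κ₂ ∧ (κ₁ + κ₂)*κ₄*t^2 > κ₁*κ₃) ∧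
    (∀ κ₁ κ₂ κ₃ κ₄ : ℝ, 0 < κ₁ → 0 < κ₂ → 0 < κ₃ → 0 < κ₄ →
      ((∃ t : ℝ, 0 < t ∧ κ₄*t^2 = κ₃ - κ₁ - κ₂ ∧ (κ₁ + κ₂)*κ₄*t^2 > κ₁*κ₃)
        ↔ κ₂*κ₃ > (κ₁ + κ₂)^2)) := by
  constructor
  · exact ⟨1, 1, 5, 3, 1, by norm_num⟩
  · intro κ₁ κ₂ κ₃ κ₄ h1 h2 h3 h4
    constructor
    · rintro ⟨t, ht, heq, hgt⟩
      nlinarith [sq_nonneg t, sq_nonneg (κ₁ + κ₂)]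
    · intro h
      have hpos : 0 < κ₃ - κ₁ - κ₂ := by nlinarith
      refine ⟨Real.sqrt ((κ₃ - κ₁ - κ₂)/κ₄), Real.sqrt_pos.mpr (by positivity), ?_, ?_⟩
      · rw [Real.sq_sqrt (by positivity)]
        field_simp
      · rw [Real.sq_sqrt (by positivity)]
        have : κ₄ * ((κ₃ - κ₁ - κ₂)/κ₄) = κ₃ - κ₁ - κ₂ := by field_simp
        nlinarith [this]
end
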